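/- Let p be a prime and let m and n be integers with 1 ≤ m ≤ n. Then the sum of the first m terms of s_p(m,n) equals m·n, i.e. Σ_{k=1}^{m} s_p(m,n)(k) = m·n. -/
import Mathlib


/-- The negative reverse of a sequence `(a₁, …, a_u)`, namely `(−a_u, …, −a₁)`. -/
def negRev (s : List ℤ) : List ℤ := s.reverse.map (fun x => -x)

/-- Fuel-based implementation of Barry's recursively defined sequence `s_p(m,n)`.
In every recursive call the quantity `2*m + n` strictly decreases, so fuel
`2*m + n + 1` always suffices; see `sp` below. -/
def spAux (p : ℕ) : ℕ → ℕ → ℕ → List ℤ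
  | 0, _, _ => []
  | (fuel+1), m, n =>
    if m = 0 then List.replicate n (0 : ℤ)
    else
      let k := Nat.log p n
      let q := p ^ k
      let b := n / q
      let d := n % q
      let a := m / q
      let c := m % q
      let s12 : List ℤ × List ℤ :=
        if p ^ (k+1) < m + n then
          -- Case 1
          (List.replicate (m + n - p ^ (k+1)) ((p ^ (k+1) : ℕ) : ℤ),
           spAux p fuel (p ^ (k+1) - n) (p ^ (k+1) - m))
        else if q < c + d then
          -- Case 2
          (List.replicate (c + d - q) (((a + b + 1) * q : ℕ) : ℤ),
           spAux p fuel ((a + b + 1) * q - n) ((a + b + 1) * q - m))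
        else if 1 ≤ c + d ∧ 0 < a then
          -- Case 3
          ((spAux p fuel (min c d) (max c d)).map (fun x => x + (((a + b) * q : ℕ) : ℤ)),
           spAux p fuel ((a + b) * q - n) ((a + b) * q - m))
        else if a = 0 ∧ 0 < d then
          -- Case 4
          (((spAux p fuel m (b * q - d)).filter (fun x => decide (x < 0))).map
              (fun x => x + ((2 * b * q : ℕ) : ℤ)),
           List.replicate (n - m) (0 : ℤ))
        else if a = 0 ∧ d = 0 then
          -- Case 5
          (List.replicate m ((b * q : ℕ) : ℤ),
           List.replicate (b * q - m) (0 : ℤ))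
        else
          -- Case 6
          (List.replicate q (((a + b - 1) * q : ℕ) : ℤ),
           spAux p fuel ((a - 1) * q) ((b - 1) * q))
      s12.1 ++ s12.2 ++ negRev s12.1

/-- Barry's sequence `s_p(m,n)`, a nonincreasing sequence of `m + n` integers. -/
def sp (p m n : ℕ) : List ℤ := spAux p (2 * m + n + 1) m n

/-- The Jordan partition `λ(m,n,p)`: the first `m` terms of `s_p(m,n)`. -/
def jordanPartition (p m n : ℕ) : List ℤ := (sp p m n).take m

/-- `λ(m,n,p)` is standard iff `λ_i = m + n − 2i + 1` for all `1 ≤ i ≤ m`. -/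
def IsStandard (p m n : ℕ) : Prop :=
  jordanPartition p m n =
    (List.range m).map (fun i => (m : ℤ) + (n : ℤ) - 2 * ((i : ℤ) + 1) + 1)

section SpProof

lemma negRev_length (s : List ℤ) : (negRev s).length = s.length := by simp [negRev]

lemma negRev_append (s t : List ℤ) : negRev (s ++ t) = negRev t ++ negRev s := by
  simp [negRev]

lemma negRev_negRev (s : List ℤ) : negRev (negRev s) = s := by
  simp [negRev, Function.comp]

lemma negRev_sum (s : List ℤ) : (negRev s).sum = -s.sum := by
  induction s with
  | nil => simp [negRev]
  | cons a s ih => simp [negRev] at ih ⊢; omega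

lemma mem_negRev {x : ℤ} {s : List ℤ} : x ∈ negRev s ↔ -x ∈ s := by
  simp only [negRev, List.mem_map, List.mem_reverse]
  constructor
  · rintro ⟨a, ha, rfl⟩; simpa
  · intro h; exact ⟨-x, h, by ring⟩

lemma sum_map_add_const (l : List ℤ) (k : ℤ) :
    (l.map (fun x => x + k)).sum = l.sum + l.length * k := by
  induction l with
  | nil => simp
  | cons a l ih => simp [ih]; ring

/-- The inductive invariant for `spAux`. -/
structure Good (m n : ℕ) (s : List ℤ) : Prop where
  hmn : m ≤ n
  len : s.length = m + n
  anti : negRev s = s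
  mid : ∀ x ∈ (s.drop m).take (n - m), x = 0
  bnd : ∀ x ∈ s.take m, (n : ℤ) - m + 1 ≤ x ∧ x ≤ (m : ℤ) + n - 1
  tsum : (s.take m).sum = (m : ℤ) * n

lemma good_replicate_zero (n : ℕ) : Good 0 n (List.replicate n (0 : ℤ)) := by
  constructor
  · exact Nat.zero_le n
  · simp
  · simp [negRev, List.map_replicate]
  · intro x hx
    exact List.eq_of_mem_replicate (List.mem_of_mem_drop (List.mem_of_mem_take hx))
  · intro x hx; simp at hx
  · simp

lemma Good.drop_n {m n : ℕ} {s : List ℤ} (h : Good m n s) :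
    s.drop n = negRev (s.take m) := by
  have hmn := h.hmn
  have hlen := h.len
  have hnm : s.length - m = n := by omega
  have h1 : s.take m = negRev (s.drop n) := by
    conv_lhs => rw [← h.anti]
    unfold negRev
    rw [← List.map_take, List.take_reverse, hnm]
  rw [h1, negRev_negRev]

lemma Good.decomp {m n : ℕ} {s : List ℤ} (h : Good m n s) :
    s = s.take m ++ (s.drop m).take (n - m) ++ negRev (s.take m) := by
  have hmn := h.hmn
  rw [← h.drop_n]
  rw [List.append_assoc]
  nth_rewrite 1 [← List.take_append_drop m s]
  congr 1
  nth_rewrite 1 [← List.take_append_drop (n - m) (s.drop m)]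
  congr 1
  rw [List.drop_drop]
  congr 1
  omega

lemma Good.sum_zero {m n : ℕ} {s : List ℤ} (h : Good m n s) : s.sum = 0 := by
  conv_lhs => rw [h.decomp]
  rw [List.sum_append, List.sum_append, negRev_sum]
  have hz : ((s.drop m).take (n - m)).sum = 0 := List.sum_eq_zero h.mid
  rw [hz]
  ring

lemma Good.take_len {m n : ℕ} {s : List ℤ} (h : Good m n s) : (s.take m).length = m := by
  rw [List.length_take, h.len]; omega

lemma Good.mem_bound {m n : ℕ} {s : List ℤ} (h : Good m n s) {x : ℤ} (hx : x ∈ s) :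
    -((m : ℤ) + n - 1) ≤ x ∧ x ≤ (m : ℤ) + n - 1 := by
  have hne : 1 ≤ m + n := by
    have hlen := h.len
    rcases s with _ | ⟨y, t⟩
    · simp at hx
    · simp at hlen; omega
  have hmn : (m : ℤ) ≤ (n : ℤ) := by exact_mod_cast h.hmn
  have hmn1 : (1:ℤ) ≤ (m : ℤ) + n := by exact_mod_cast hne
  have hm0 : (0:ℤ) ≤ (m:ℤ) := by positivity
  rw [h.decomp] at hx
  simp only [List.mem_append] at hx
  rcases hx with (hx | hx) | hx
  · have hb := h.bnd x hx
    constructor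
    · linarith [hb.1]
    · exact hb.2
  · have := h.mid x hx
    subst this
    constructor <;> linarith
  · rw [mem_negRev] at hx
    have hb := h.bnd _ hx
    constructor
    · linarith [hb.2]
    · linarith [hb.1]

lemma Good.filter_neg {m n : ℕ} {s : List ℤ} (h : Good m n s) :
    s.filter (fun x => decide (x < 0)) = negRev (s.take m) := by
  conv_lhs => rw [h.decomp]
  rw [List.filter_append, List.filter_append]
  have hmn : ((m:ℤ)) ≤ (n:ℤ) := by exact_mod_cast h.hmn
  have h1 : (s.take m).filter (fun x => decide (x < 0)) = [] := by
    rw [List.filter_eq_nil_iff]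
    intro x hx
    have := (h.bnd x hx).1
    simp only [decide_eq_true_eq, not_lt]
    linarith
  have h2 : ((s.drop m).take (n - m)).filter (fun x => decide (x < 0)) = [] := by
    rw [List.filter_eq_nil_iff]
    intro x hx
    have := h.mid x hx
    simp [this]
  have h3 : (negRev (s.take m)).filter (fun x => decide (x < 0)) = negRev (s.take m) := by
    rw [List.filter_eq_self]
    intro x hx
    rw [mem_negRev] at hx
    have := (h.bnd _ hx).1
    simp only [decide_eq_true_eq]
    linarith
  rw [h1, h2, h3]; simp

/-- The gluing lemma. -/
lemma Good.glue {m' n' ℓ m n : ℕ} {s1 s2 : List ℤ} (h2 : Good m' n' s2)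
    (hL : s1.length = ℓ) (hm : m = ℓ + m') (hn : n = ℓ + n')
    (hb : ∀ x ∈ s1, (n' : ℤ) - m' + 1 ≤ x ∧ x ≤ (m : ℤ) + n - 1)
    (hs : s1.sum + (m' : ℤ) * n' = (m : ℤ) * n) :
    Good m n (s1 ++ s2 ++ negRev s1) := by
  have hm'n' := h2.hmn
  have hlen2 := h2.len
  have hmz : (m:ℤ) = (ℓ:ℤ) + m' := by exact_mod_cast hm
  have hnz : (n:ℤ) = (ℓ:ℤ) + n' := by exact_mod_cast hn
  have e1 : m - ℓ = m' := by omega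
  have e2 : m' - (m' + n') = 0 := by omega
  have htake : (s1 ++ s2 ++ negRev s1).take m = s1 ++ s2.take m' := by
    rw [List.append_assoc, List.take_append]
    rw [List.take_of_length_le (by rw [hL]; omega), hL]
    congr 1
    rw [List.take_append, hlen2, e1, e2]
    simp
  have hdrop : (s1 ++ s2 ++ negRev s1).drop m = s2.drop m' ++ negRev s1 := by
    rw [List.append_assoc, List.drop_append]
    rw [List.drop_of_length_le (by rw [hL]; omega), hL]
    rw [List.drop_append, hlen2, e1, e2]
    simp
  constructor
  · omega
  · simp only [List.length_append, negRev_length, hL, hlen2]; omega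
  · rw [negRev_append, negRev_append, negRev_negRev, h2.anti, List.append_assoc]
  · intro x hx
    rw [hdrop, List.take_append] at hx
    rcases List.mem_append.mp hx with hx | hx
    · have hnm : n - m = n' - m' := by omega
      rw [hnm] at hx
      exact h2.mid x hx
    · exfalso
      have hz : n - m - (s2.drop m').length = 0 := by
        rw [List.length_drop, hlen2]; omega
      rw [hz] at hx
      simp at hx
  · intro x hx
    rw [htake] at hx
    rcases List.mem_append.mp hx with hx | hx
    · have hbx := hb x hx
      constructor
      · have := hbx.1; linarith
      · exact hbx.2
    · have hbx := h2.bnd x hx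
      constructor
      · have := hbx.1; linarith
      · have := hbx.2
        have hl0 : (0:ℤ) ≤ (ℓ:ℤ) := by positivity
        linarith
  · rw [htake, List.sum_append, h2.tsum, hs]

end SpProof
lemma spAux_c1 (p fuel m n : ℕ) (hm : m ≠ 0)
    (h1 : p ^ (Nat.log p n + 1) < m + n) :
    spAux p (fuel+1) m n =
      List.replicate (m + n - p ^ (Nat.log p n + 1)) ((p ^ (Nat.log p n + 1) : ℕ) : ℤ)
        ++ spAux p fuel (p ^ (Nat.log p n + 1) - n) (p ^ (Nat.log p n + 1) - m)
        ++ negRev (List.replicate (m + n - p ^ (Nat.log p n + 1)) ((p ^ (Nat.log p n + 1) : ℕ) : ℤ)) := by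
  rw [spAux]; simp only [if_neg hm, if_pos h1]

lemma spAux_c2 (p fuel m n q b d a c : ℕ) (hm : m ≠ 0)
    (hq : q = p ^ Nat.log p n) (hbv : b = n / q) (hdv : d = n % q)
    (hav : a = m / q) (hcv : c = m % q)
    (h1 : ¬ p ^ (Nat.log p n + 1) < m + n) (h2 : q < c + d) :
    spAux p (fuel+1) m n =
      List.replicate (c + d - q) (((a + b + 1) * q : ℕ) : ℤ)
        ++ spAux p fuel ((a + b + 1) * q - n) ((a + b + 1) * q - m)
        ++ negRev (List.replicate (c + d - q) (((a + b + 1) * q : ℕ) : ℤ)) := by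
  subst hbv; subst hdv; subst hav; subst hcv; subst hq
  rw [spAux]; simp only [if_neg hm, if_neg h1, if_pos h2]

lemma spAux_c3 (p fuel m n q b d a c : ℕ) (hm : m ≠ 0)
    (hq : q = p ^ Nat.log p n) (hbv : b = n / q) (hdv : d = n % q)
    (hav : a = m / q) (hcv : c = m % q)
    (h1 : ¬ p ^ (Nat.log p n + 1) < m + n) (h2 : ¬ q < c + d)
    (h3 : 1 ≤ c + d ∧ 0 < a) :
    spAux p (fuel+1) m n =
      (spAux p fuel (min c d) (max c d)).map (fun x => x + (((a + b) * q : ℕ) : ℤ))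
        ++ spAux p fuel ((a + b) * q - n) ((a + b) * q - m)
        ++ negRev ((spAux p fuel (min c d) (max c d)).map (fun x => x + (((a + b) * q : ℕ) : ℤ))) := by
  subst hbv; subst hdv; subst hav; subst hcv; subst hq
  rw [spAux]; simp only [if_neg hm, if_neg h1, if_neg h2, if_pos h3]

lemma spAux_c4 (p fuel m n q b d a c : ℕ) (hm : m ≠ 0)
    (hq : q = p ^ Nat.log p n) (hbv : b = n / q) (hdv : d = n % q)
    (hav : a = m / q) (hcv : c = m % q)
    (h1 : ¬ p ^ (Nat.log p n + 1) < m + n) (h2 : ¬ q < c + d)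
    (h3 : ¬ (1 ≤ c + d ∧ 0 < a)) (h4 : a = 0 ∧ 0 < d) :
    spAux p (fuel+1) m n =
      ((spAux p fuel m (b * q - d)).filter (fun x => decide (x < 0))).map
          (fun x => x + ((2 * b * q : ℕ) : ℤ))
        ++ List.replicate (n - m) (0 : ℤ)
        ++ negRev (((spAux p fuel m (b * q - d)).filter (fun x => decide (x < 0))).map
          (fun x => x + ((2 * b * q : ℕ) : ℤ))) := by
  subst hbv; subst hdv; subst hav; subst hcv; subst hq
  rw [spAux]; simp only [if_neg hm, if_neg h1, if_neg h2, if_neg h3, if_pos h4]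

lemma spAux_c5 (p fuel m n q b d a c : ℕ) (hm : m ≠ 0)
    (hq : q = p ^ Nat.log p n) (hbv : b = n / q) (hdv : d = n % q)
    (hav : a = m / q) (hcv : c = m % q)
    (h1 : ¬ p ^ (Nat.log p n + 1) < m + n) (h2 : ¬ q < c + d)
    (h3 : ¬ (1 ≤ c + d ∧ 0 < a)) (h4 : ¬ (a = 0 ∧ 0 < d)) (h5 : a = 0 ∧ d = 0) :
    spAux p (fuel+1) m n =
      List.replicate m ((b * q : ℕ) : ℤ)
        ++ List.replicate (b * q - m) (0 : ℤ)
        ++ negRev (List.replicate m ((b * q : ℕ) : ℤ)) := by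
  subst hbv; subst hdv; subst hav; subst hcv; subst hq
  rw [spAux]; simp only [if_neg hm, if_neg h1, if_neg h2, if_neg h3, if_neg h4, if_pos h5]

lemma spAux_c6 (p fuel m n q b d a c : ℕ) (hm : m ≠ 0)
    (hq : q = p ^ Nat.log p n) (hbv : b = n / q) (hdv : d = n % q)
    (hav : a = m / q) (hcv : c = m % q)
    (h1 : ¬ p ^ (Nat.log p n + 1) < m + n) (h2 : ¬ q < c + d)
    (h3 : ¬ (1 ≤ c + d ∧ 0 < a)) (h4 : ¬ (a = 0 ∧ 0 < d)) (h5 : ¬ (a = 0 ∧ d = 0)) :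
    spAux p (fuel+1) m n =
      List.replicate q (((a + b - 1) * q : ℕ) : ℤ)
        ++ spAux p fuel ((a - 1) * q) ((b - 1) * q)
        ++ negRev (List.replicate q (((a + b - 1) * q : ℕ) : ℤ)) := by
  subst hbv; subst hdv; subst hav; subst hcv; subst hq
  rw [spAux]; simp only [if_neg hm, if_neg h1, if_neg h2, if_neg h3, if_neg h4, if_neg h5]

lemma good_spAux (p : ℕ) (hp : 2 ≤ p) :
    ∀ fuel m n, m ≤ n → 2 * m + n < fuel → Good m n (spAux p fuel m n) := by
  intro fuel
  induction fuel with
  | zero => intro m n _ h; omega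
  | succ fuel ih =>
    intro m n hmn hfuel
    by_cases hm0 : m = 0
    · subst hm0
      rw [spAux, if_pos rfl]
      exact good_replicate_zero n
    have hm1 : 1 ≤ m := by omega
    have hn1 : 1 ≤ n := by omega
    obtain ⟨q, hq⟩ : ∃ q, q = p ^ Nat.log p n := ⟨_, rfl⟩
    obtain ⟨b, hbv⟩ : ∃ b, b = n / q := ⟨_, rfl⟩
    obtain ⟨d, hdv⟩ : ∃ d, d = n % q := ⟨_, rfl⟩
    obtain ⟨a, hav⟩ : ∃ a, a = m / q := ⟨_, rfl⟩
    obtain ⟨c, hcv⟩ : ∃ c, c = m % q := ⟨_, rfl⟩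
    obtain ⟨A, hA⟩ : ∃ A, A = a * q := ⟨_, rfl⟩
    obtain ⟨B, hB⟩ : ∃ B, B = b * q := ⟨_, rfl⟩
    have hq1 : 1 ≤ q := by rw [hq]; exact Nat.one_le_pow _ _ (by omega)
    have hqn : q ≤ n := by rw [hq]; exact Nat.pow_log_le_self p (by omega)
    have hnP : n < p ^ (Nat.log p n + 1) := Nat.lt_pow_succ_log_self hp n
    have hd : d < q := by rw [hdv]; exact Nat.mod_lt _ (by omega)
    have hc : c < q := by rw [hcv]; exact Nat.mod_lt _ (by omega)
    have hmA : m = A + c := by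
      have h := Nat.div_add_mod m q
      rw [← hav, ← hcv] at h
      rw [hA, Nat.mul_comm a q]
      omega
    have hnB : n = B + d := by
      have h := Nat.div_add_mod n q
      rw [← hbv, ← hdv] at h
      rw [hB, Nat.mul_comm b q]
      omega
    have hb1 : 1 ≤ b := by
      rw [hbv]
      exact (Nat.one_le_div_iff (by omega)).mpr hqn
    have hab : a ≤ b := by rw [hav, hbv]; exact Nat.div_le_div_right hmn
    have hAB : A ≤ B := by rw [hA, hB]; exact Nat.mul_le_mul hab (le_refl q)
    have hqB : q ≤ B := by
      rw [hB]
      calc q = 1 * q := (one_mul q).symm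
        _ ≤ b * q := Nat.mul_le_mul hb1 (le_refl q)
    by_cases h1 : p ^ (Nat.log p n + 1) < m + n
    · -- Case 1
      rw [spAux_c1 p fuel m n hm0 h1]
      obtain ⟨P, hP⟩ : ∃ P, P = p ^ (Nat.log p n + 1) := ⟨_, rfl⟩
      rw [← hP]
      have hnP' : n < P := by rw [hP]; exact hnP
      have h1' : P < m + n := by rw [hP]; exact h1
      refine Good.glue (ih (P - n) (P - m) (by omega) (by omega)) (ℓ := m + n - P)
        (by simp) (by omega) (by omega) ?_ ?_
      · intro x hx
        have hx' := List.eq_of_mem_replicate hx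
        subst hx'
        constructor <;> omega
      · rw [List.sum_replicate, nsmul_eq_mul]
        have c1 : P ≤ m + n := by omega
        have c2 : n ≤ P := by omega
        have c3 : m ≤ P := by omega
        push_cast [Nat.cast_sub c1, Nat.cast_sub c2, Nat.cast_sub c3]
        ring
    · by_cases h2 : q < c + d
      · -- Case 2
        rw [spAux_c2 p fuel m n q b d a c hm0 hq hbv hdv hav hcv h1 h2]
        have eQ : (a + b + 1) * q = A + B + q := by rw [hA, hB]; ring
        rw [eQ]
        have hmz : (m : ℤ) = (A : ℤ) + c := by exact_mod_cast hmA
        have hnz : (n : ℤ) = (B : ℤ) + d := by exact_mod_cast hnB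
        refine Good.glue (ih (A + B + q - n) (A + B + q - m) (by omega) (by omega))
          (ℓ := c + d - q) (by simp) (by omega) (by omega) ?_ ?_
        · intro x hx
          have hx' := List.eq_of_mem_replicate hx
          subst hx'
          constructor <;> omega
        · rw [List.sum_replicate, nsmul_eq_mul]
          have c1 : q ≤ c + d := by omega
          have c2 : n ≤ A + B + q := by omega
          have c3 : m ≤ A + B + q := by omega
          push_cast [Nat.cast_sub c1, Nat.cast_sub c2, Nat.cast_sub c3]
          rw [hmz, hnz]
          ring
      · by_cases h3 : 1 ≤ c + d ∧ 0 < a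
        · -- Case 3
          rw [spAux_c3 p fuel m n q b d a c hm0 hq hbv hdv hav hcv h1 h2 h3]
          have eK : (a + b) * q = A + B := by rw [hA, hB]; ring
          rw [eK]
          have hqA : q ≤ A := by
            rw [hA]
            calc q = 1 * q := (one_mul q).symm
              _ ≤ a * q := Nat.mul_le_mul h3.2 (le_refl q)
          have hcd : c + d ≤ q := by omega
          have ht : Good (min c d) (max c d) (spAux p fuel (min c d) (max c d)) :=
            ih _ _ (by omega) (by omega)
          have hmz : (m : ℤ) = (A : ℤ) + c := by exact_mod_cast hmA
          have hnz : (n : ℤ) = (B : ℤ) + d := by exact_mod_cast hnB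
          refine Good.glue (ih (A + B - n) (A + B - m) (by omega) (by omega))
            (ℓ := c + d) ?_ (by omega) (by omega) ?_ ?_
          · rw [List.length_map, ht.len]; omega
          · intro x hx
            rw [List.mem_map] at hx
            obtain ⟨y, hy, rfl⟩ := hx
            have hby := ht.mem_bound hy
            have e1 : ((min c d : ℕ) : ℤ) = min (c : ℤ) (d : ℤ) := by push_cast; ring
            have e2 : ((max c d : ℕ) : ℤ) = max (c : ℤ) (d : ℤ) := by push_cast; ring
            rw [e1, e2] at hby
            constructor <;> omega
          · rw [sum_map_add_const, ht.sum_zero, ht.len]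
            have c2 : n ≤ A + B := by omega
            have c3 : m ≤ A + B := by omega
            have emm : ((min c d : ℕ) : ℤ) + ((max c d : ℕ) : ℤ) = (c : ℤ) + d := by
              exact_mod_cast congrArg (Nat.cast : ℕ → ℤ) (show min c d + max c d = c + d by omega)
            push_cast [Nat.cast_sub c2, Nat.cast_sub c3] at emm ⊢
            rw [hmz, hnz]
            linear_combination ((A : ℤ) + (B : ℤ)) * emm
        · by_cases h4 : a = 0 ∧ 0 < d
          · -- Case 4
            rw [spAux_c4 p fuel m n q b d a c hm0 hq hbv hdv hav hcv h1 h2 h3 h4]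
            have e2 : 2 * b * q = 2 * B := by rw [hB]; ring
            rw [e2, ← hB]
            have hA0 : A = 0 := by rw [hA, h4.1]; ring
            have hmc : m = c := by omega
            have hmB : m ≤ B - d := by omega
            have hdB : d ≤ B := by omega
            have ht : Good m (B - d) (spAux p fuel m (B - d)) :=
              ih _ _ (by omega) (by omega)
            rw [ht.filter_neg]
            have hnz : (n : ℤ) = (B : ℤ) + d := by exact_mod_cast hnB
            refine Good.glue (good_replicate_zero (n - m)) (ℓ := m) ?_ (by omega) (by omega) ?_ ?_
            · rw [List.length_map, negRev_length, ht.take_len]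
            · intro x hx
              rw [List.mem_map] at hx
              obtain ⟨y, hy, rfl⟩ := hx
              have hy' := mem_negRev.mp hy
              have hby := ht.bnd _ hy'
              constructor <;> omega
            · rw [sum_map_add_const, negRev_sum, ht.tsum, negRev_length, ht.take_len]
              push_cast [Nat.cast_sub hdB]
              rw [hnz]
              ring
          · by_cases h5 : a = 0 ∧ d = 0
            · -- Case 5
              rw [spAux_c5 p fuel m n q b d a c hm0 hq hbv hdv hav hcv h1 h2 h3 h4 h5]
              rw [← hB]
              have hA0 : A = 0 := by rw [hA, h5.1]; ring
              have hnB' : n = B := by omega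
              have hmB : m ≤ B := by omega
              refine Good.glue (good_replicate_zero (B - m)) (ℓ := m) (by simp)
                (by omega) (by omega) ?_ ?_
              · intro x hx
                have hx' := List.eq_of_mem_replicate hx
                subst hx'
                constructor <;> omega
              · rw [List.sum_replicate, nsmul_eq_mul]
                have : (n : ℤ) = (B : ℤ) := by exact_mod_cast hnB'
                rw [this]
                push_cast
                ring
            · -- Case 6
              rw [spAux_c6 p fuel m n q b d a c hm0 hq hbv hdv hav hcv h1 h2 h3 h4 h5]
              have ha1 : 1 ≤ a := by
                rcases Nat.eq_zero_or_pos a with h | h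
                · exfalso
                  rcases Nat.eq_zero_or_pos d with hd0 | hd0
                  · exact h5 ⟨h, hd0⟩
                  · exact h4 ⟨h, hd0⟩
                · exact h
              have hcd0 : c + d = 0 := by
                by_contra hcon
                exact h3 ⟨by omega, ha1⟩
              have hc0 : c = 0 := by omega
              have hd0 : d = 0 := by omega
              have hqA : q ≤ A := by
                rw [hA]
                calc q = 1 * q := (one_mul q).symm
                  _ ≤ a * q := Nat.mul_le_mul ha1 (le_refl q)
              have e1 : (a - 1) * q = A - q := by rw [hA, Nat.sub_mul, one_mul]
              have e2 : (b - 1) * q = B - q := by rw [hB, Nat.sub_mul, one_mul]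
              have e3 : (a + b - 1) * q = A + B - q := by
                rw [hA, hB, Nat.sub_mul, one_mul, Nat.add_mul]
              rw [e1, e2, e3]
              have hmz : (m : ℤ) = (A : ℤ) := by exact_mod_cast (by omega : m = A)
              have hnz : (n : ℤ) = (B : ℤ) := by exact_mod_cast (by omega : n = B)
              refine Good.glue (ih (A - q) (B - q) (by omega) (by omega)) (ℓ := q)
                (by simp) (by omega) (by omega) ?_ ?_
              · intro x hx
                have hx' := List.eq_of_mem_replicate hx
                subst hx'
                constructor <;> omega
              · rw [List.sum_replicate, nsmul_eq_mul]
                push_cast [Nat.cast_sub hqA, Nat.cast_sub hqB, Nat.cast_sub (by omega : q ≤ A + B)]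
                rw [hmz, hnz]
                ring

/-- For `1 ≤ m ≤ n`, the sum of the first `m` terms of `s_p(m,n)` equals `m·n`. -/
theorem sp_sum_take (p : ℕ) (hp : Nat.Prime p) (m n : ℕ) (hm : 1 ≤ m) (hmn : m ≤ n) :
    ((sp p m n).take m).sum = (m : ℤ) * (n : ℤ) := by
  exact (good_spAux p hp.two_le (2 * m + n + 1) m n hmn (by omega)).tsum
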